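/- Suppose H(Y|X)=0, I(Y;N)=0, H(X|Y,N)=0. If a representation Z' satisfies sufficiency I(Z';Y)=I(X;Y) and invariance to the nuisance I(Z';N)=0, and Z' is obtained through a Markov chain (Y,N) → X → Z', then Z' is 0-minimal (i.e., minimal) sufficient: I(Z';X) ≤ I(Z̃;X) for every sufficient representation Z̃ with (Y,N) → X → Z̃ Markov. -/

import Mathlib

open Real

noncomputable def mass {Ω α : Type*} [Fintype Ω] [DecidableEq α]
    (p : Ω → ℝ) (X : Ω → α) (x : α) : ℝ :=
  ∑ ω, if X ω = x then p ω else 0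

noncomputable def ent {Ω α : Type*} [Fintype Ω] [Fintype α] [DecidableEq α]
    (p : Ω → ℝ) (X : Ω → α) : ℝ :=
  ∑ x, Real.negMulLog (mass p X x)

noncomputable def condEnt {Ω α β : Type*} [Fintype Ω] [Fintype α] [Fintype β]
    [DecidableEq α] [DecidableEq β] (p : Ω → ℝ) (X : Ω → α) (Y : Ω → β) : ℝ :=
  ent p (fun ω => (X ω, Y ω)) - ent p Y

noncomputable def mi {Ω α β : Type*} [Fintype Ω] [Fintype α] [Fintype β]
    [DecidableEq α] [DecidableEq β] (p : Ω → ℝ) (X : Ω → α) (Y : Ω → β) : ℝ :=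
  ent p X + ent p Y - ent p (fun ω => (X ω, Y ω))

noncomputable def cmi {Ω α β γ : Type*} [Fintype Ω] [Fintype α] [Fintype β] [Fintype γ]
    [DecidableEq α] [DecidableEq β] [DecidableEq γ]
    (p : Ω → ℝ) (A : Ω → α) (B : Ω → β) (C : Ω → γ) : ℝ :=
  condEnt p A C - condEnt p A (fun ω => (B ω, C ω))

/-!
Since `X` is a function of `(Y, N)`, data processing, invariance and `I(Y;N) = 0` give
`I(Z';X) ≤ I(Z';(Y,N)) = I(Z';N) + I(Z';Y|N) = I(Z';Y|N) ≤ H(Y|N) = H(Y)`.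
Since `Y` is a function of `X`, `H(Y) = I(X;Y)`, and for a sufficient `Z̃` data processing again gives
`I(X;Y) = I(Z̃;Y) ≤ I(Z̃;X)`.
-/

section Mass

variable {Ω α β : Type*} [Fintype Ω] (p : Ω → ℝ)

lemma mass_nonneg [DecidableEq α] (hp : ∀ ω, 0 ≤ p ω) (X : Ω → α) (x : α) :
    0 ≤ mass p X x :=
  Finset.sum_nonneg fun ω _ => by split_ifs <;> simp [hp ω]

lemma sum_mass [Fintype α] [DecidableEq α] (X : Ω → α) : ∑ x, mass p X x = ∑ ω, p ω := by
  unfold mass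
  rw [Finset.sum_comm]
  simp

lemma mass_comp [Fintype α] [DecidableEq α] [DecidableEq β] (g : α → β) (X : Ω → α) (y : β) :
    mass p (fun ω => g (X ω)) y = ∑ x with g x = y, mass p X x := by
  unfold mass
  rw [Finset.sum_comm]
  refine Finset.sum_congr rfl fun ω _ => ?_
  rw [Finset.sum_ite_eq]
  simp

lemma mass_le_mass_comp [Fintype α] [DecidableEq α] [DecidableEq β] (hp : ∀ ω, 0 ≤ p ω)
    (g : α → β) (X : Ω → α) (x : α) :
    mass p X x ≤ mass p (fun ω => g (X ω)) (g x) := by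
  rw [mass_comp p g X]
  exact Finset.single_le_sum (f := mass p X) (fun _ _ => mass_nonneg p hp X _) (by simp)

lemma mass_eq_sum_mass_pair [Fintype α] [DecidableEq α] [DecidableEq β]
    (A : Ω → α) (B : Ω → β) (b : β) :
    mass p B b = ∑ a, mass p (fun ω => (A ω, B ω)) (a, b) := by
  unfold mass
  rw [Finset.sum_comm]
  refine Finset.sum_congr rfl fun ω _ => ?_
  simp [Prod.ext_iff, ite_and, Finset.sum_ite_eq]

end Mass

section Entropy

variable {Ω α β : Type*} [Fintype Ω] [Fintype α] [Fintype β] [DecidableEq α] [DecidableEq β]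
  (p : Ω → ℝ)

lemma ent_eq_neg_sum_mul_log (X : Ω → α) :
    ent p X = -∑ x, mass p X x * log (mass p X x) := by
  simp [ent, negMulLog, Finset.sum_neg_distrib]

lemma ent_comp_eq_neg_sum (g : α → β) (X : Ω → α) :
    ent p (fun ω => g (X ω)) = -∑ x, mass p X x * log (mass p (fun ω => g (X ω)) (g x)) := by
  rw [ent, ← Finset.sum_fiberwise Finset.univ g, ← Finset.sum_neg_distrib]
  refine Finset.sum_congr rfl fun y _ => ?_
  rw [Finset.sum_congr rfl fun x hx => by rw [(Finset.mem_filter.1 hx).2],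
    ← Finset.sum_mul, ← mass_comp, negMulLog, neg_mul]

lemma ent_comp_le (hp : ∀ ω, 0 ≤ p ω) (g : α → β) (X : Ω → α) :
    ent p (fun ω => g (X ω)) ≤ ent p X := by
  rw [ent_comp_eq_neg_sum, ent_eq_neg_sum_mul_log, neg_le_neg_iff]
  refine Finset.sum_le_sum fun x _ => ?_
  rcases (mass_nonneg p hp X x).eq_or_lt with h | h
  · simp [← h]
  · exact mul_le_mul_of_nonneg_left
      (log_le_log h (mass_le_mass_comp p hp g X x)) h.le

lemma ent_comp_equiv (hp : ∀ ω, 0 ≤ p ω) (e : α ≃ β) (X : Ω → α) :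
    ent p (fun ω => e (X ω)) = ent p X :=
  le_antisymm (ent_comp_le p hp e X) (by simpa using ent_comp_le p hp e.symm fun ω => e (X ω))

end Entropy

lemma sub_le_mul_sub_log {t q : ℝ} (ht : 0 ≤ t) (hq : 0 ≤ q) (hpos : 0 < t → 0 < q) :
    t - q ≤ t * (log t - log q) := by
  rcases ht.eq_or_lt with rfl | ht
  · simpa using hq
  have hq := hpos ht
  have h := mul_le_mul_of_nonneg_left (log_le_sub_one_of_pos (div_pos hq ht)) ht.le
  rw [log_div hq.ne' ht.ne', mul_sub_one, mul_div_cancel₀ q ht.ne'] at h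
  linarith

lemma sub_mul_div_le_mul_log {t u v w : ℝ} (ht : 0 ≤ t) (htu : t ≤ u) (htv : t ≤ v)
    (htw : t ≤ w) : t - u * v / w ≤ t * (log t + log w - log u - log v) := by
  rcases ht.eq_or_lt with rfl | ht
  · simpa using div_nonneg (mul_nonneg htu htv) htw
  have hu := ht.trans_le htu
  have hv := ht.trans_le htv
  have hw := ht.trans_le htw
  have h := sub_le_mul_sub_log (q := u * v / w) ht.le (by positivity) fun _ => by positivity
  rw [log_div (mul_pos hu hv).ne' hw.ne', log_mul hu.ne' hv.ne'] at h
  linarith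

section InformationMeasures

variable {Ω α β γ : Type*} [Fintype Ω] [Fintype α] [Fintype β] [Fintype γ]
  [DecidableEq α] [DecidableEq β] [DecidableEq γ] (p : Ω → ℝ)

lemma mi_comm (hp : ∀ ω, 0 ≤ p ω) (A : Ω → α) (B : Ω → β) : mi p A B = mi p B A := by
  have h := ent_comp_equiv p hp (Equiv.prodComm α β) fun ω => (A ω, B ω)
  simp only [Equiv.prodComm_apply, Prod.swap_prod_mk] at h
  simp only [mi, h]
  ring

lemma mi_eq_ent_sub_condEnt (A : Ω → α) (B : Ω → β) : mi p A B = ent p A - condEnt p A B := by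
  simp only [mi, condEnt]
  ring

lemma condEnt_nonneg (hp : ∀ ω, 0 ≤ p ω) (A : Ω → α) (B : Ω → β) : 0 ≤ condEnt p A B :=
  sub_nonneg.2 (ent_comp_le p hp Prod.snd fun ω => (A ω, B ω))

lemma cmi_comm (hp : ∀ ω, 0 ≤ p ω) (A : Ω → α) (B : Ω → β) (C : Ω → γ) :
    cmi p A B C = cmi p B A C := by
  have h := ent_comp_equiv p hp
    (((Equiv.prodAssoc α β γ).symm.trans ((Equiv.prodComm α β).prodCongr (Equiv.refl γ))).trans
      (Equiv.prodAssoc β α γ)) fun ω => (A ω, B ω, C ω)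
  simp only [Equiv.trans_apply, Equiv.prodAssoc_symm_apply, Equiv.prodCongr_apply,
    Equiv.coe_prodComm, Equiv.coe_refl, Prod.map_apply, Prod.swap_prod_mk, id_eq,
    Equiv.prodAssoc_apply] at h
  simp only [cmi, condEnt, h]
  ring

lemma mi_pair_comm (hp : ∀ ω, 0 ≤ p ω) (A : Ω → α) (B : Ω → β) (C : Ω → γ) :
    mi p A (fun ω => (B ω, C ω)) = mi p A (fun ω => (C ω, B ω)) := by
  have hBC := ent_comp_equiv p hp (Equiv.prodComm β γ) fun ω => (B ω, C ω)
  have hABC := ent_comp_equiv p hp ((Equiv.refl α).prodCongr (Equiv.prodComm β γ))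
    fun ω => (A ω, B ω, C ω)
  simp only [mi, ← hBC, ← hABC]
  simp

lemma mi_pair_eq_add_cmi (A : Ω → α) (B : Ω → β) (C : Ω → γ) :
    mi p A (fun ω => (B ω, C ω)) = mi p A C + cmi p A B C := by
  simp only [mi, cmi, condEnt]
  ring

lemma cmi_eq_sum (A : Ω → α) (B : Ω → β) (C : Ω → γ) :
    cmi p A B C = ∑ z, mass p (fun ω => (A ω, B ω, C ω)) z *
      (log (mass p (fun ω => (A ω, B ω, C ω)) z) + log (mass p C z.2.2)
        - log (mass p (fun ω => (A ω, C ω)) (z.1, z.2.2))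
        - log (mass p (fun ω => (B ω, C ω)) z.2)) := by
  have hAC := ent_comp_eq_neg_sum p (fun z : α × β × γ => (z.1, z.2.2)) fun ω => (A ω, B ω, C ω)
  have hBC := ent_comp_eq_neg_sum p (fun z : α × β × γ => z.2) fun ω => (A ω, B ω, C ω)
  have hC := ent_comp_eq_neg_sum p (fun z : α × β × γ => z.2.2) fun ω => (A ω, B ω, C ω)
  simp only at hAC hBC hC
  simp only [cmi, condEnt, hAC, hBC, hC, ent_eq_neg_sum_mul_log p fun ω => (A ω, B ω, C ω),
    mul_add, mul_sub, Finset.sum_add_distrib, Finset.sum_sub_distrib]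
  ring

lemma sum_mass_mul_mass_div_mass (A : Ω → α) (B : Ω → β) (C : Ω → γ) :
    ∑ z : α × β × γ, mass p (fun ω => (A ω, C ω)) (z.1, z.2.2)
      * mass p (fun ω => (B ω, C ω)) z.2 / mass p C z.2.2 = ∑ ω, p ω := by
  calc _ = ∑ a, ∑ b, ∑ c, mass p (fun ω => (A ω, C ω)) (a, c)
        * mass p (fun ω => (B ω, C ω)) (b, c) / mass p C c := by
          simp only [Fintype.sum_prod_type]
    _ = ∑ c, ∑ a, ∑ b, mass p (fun ω => (A ω, C ω)) (a, c)
        * mass p (fun ω => (B ω, C ω)) (b, c) / mass p C c :=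
          (Finset.sum_congr rfl fun _ _ => Finset.sum_comm).trans Finset.sum_comm
    _ = ∑ c, (∑ a, mass p (fun ω => (A ω, C ω)) (a, c))
        * (∑ b, mass p (fun ω => (B ω, C ω)) (b, c)) / mass p C c := by
          simp only [Finset.sum_mul_sum, Finset.sum_div]
    _ = ∑ c, mass p C c := by simp only [← mass_eq_sum_mass_pair, mul_self_div_self]
    _ = ∑ ω, p ω := sum_mass p C

/-- Gibbs' inequality against `q(a,b,c) = P(a,c) P(b,c) / P(c)`, whose total mass equals that of
`P(a,b,c)`. -/
lemma cmi_nonneg (hp : ∀ ω, 0 ≤ p ω) (A : Ω → α) (B : Ω → β) (C : Ω → γ) :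
    0 ≤ cmi p A B C := by
  have hsum : ∑ z : α × β × γ, (mass p (fun ω => (A ω, B ω, C ω)) z
      - mass p (fun ω => (A ω, C ω)) (z.1, z.2.2) * mass p (fun ω => (B ω, C ω)) z.2
        / mass p C z.2.2) = 0 := by
    rw [Finset.sum_sub_distrib, sum_mass, sum_mass_mul_mass_div_mass, sub_self]
  rw [cmi_eq_sum, ← hsum]
  exact Finset.sum_le_sum fun z _ => sub_mul_div_le_mul_log (mass_nonneg p hp _ z)
    (mass_le_mass_comp p hp (fun z => (z.1, z.2.2)) _ z) (mass_le_mass_comp p hp Prod.snd _ z)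
    (mass_le_mass_comp p hp (fun z => z.2.2) _ z)

lemma cmi_le_condEnt (hp : ∀ ω, 0 ≤ p ω) (A : Ω → α) (B : Ω → β) (C : Ω → γ) :
    cmi p A B C ≤ condEnt p A C :=
  sub_le_self _ (condEnt_nonneg p hp A _)

lemma mi_le_mi_of_cmi_eq_zero (hp : ∀ ω, 0 ≤ p ω) {A : Ω → α} {B : Ω → β} {C : Ω → γ}
    (h : cmi p A B C = 0) : mi p A B ≤ mi p A C := by
  have hBC := mi_pair_eq_add_cmi p A B C
  have hCB := mi_pair_eq_add_cmi p A C B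
  have := cmi_nonneg p hp A C B
  rw [mi_pair_comm p hp] at hBC
  linarith

lemma mi_le_mi_of_condEnt_eq_zero (hp : ∀ ω, 0 ≤ p ω) (A : Ω → α) {B : Ω → β} {C : Ω → γ}
    (h : condEnt p B C = 0) : mi p A B ≤ mi p A C := by
  refine mi_le_mi_of_cmi_eq_zero p hp (le_antisymm ?_ (cmi_nonneg p hp A B C))
  rw [cmi_comm p hp, ← h]
  exact cmi_le_condEnt p hp B A C

end InformationMeasures

theorem stmt_16_general {Ω α β γ ζ δ : Type*} [Fintype Ω] [Fintype α] [DecidableEq α]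
    [Fintype β] [DecidableEq β] [Fintype γ] [DecidableEq γ] [Fintype ζ] [DecidableEq ζ]
    [Fintype δ] [DecidableEq δ]
    (p : Ω → ℝ) (hp : ∀ ω, 0 ≤ p ω)
    (X : Ω → α) (Y : Ω → β) (N : Ω → γ) (Z' : Ω → ζ)
    (hYX : condEnt p Y X = 0)
    (hYN : mi p Y N = 0)
    (hXdet : condEnt p X (fun ω => (Y ω, N ω)) = 0)
    (hinv : mi p Z' N = 0) :
    ∀ Zt : Ω → δ, mi p Zt Y = mi p X Y →
      cmi p (fun ω => (Y ω, N ω)) Zt X = 0 →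
      mi p Z' X ≤ mi p Zt X := by
  intro Zt hsufft _
  calc mi p Z' X ≤ mi p Z' (fun ω => (Y ω, N ω)) := mi_le_mi_of_condEnt_eq_zero p hp Z' hXdet
    _ = cmi p Z' Y N := by rw [mi_pair_eq_add_cmi, hinv, zero_add]
    _ = cmi p Y Z' N := cmi_comm p hp Z' Y N
    _ ≤ condEnt p Y N := cmi_le_condEnt p hp Y Z' N
    _ = ent p Y := by linarith [mi_eq_ent_sub_condEnt p Y N]
    _ = mi p X Y := by rw [mi_comm p hp, mi_eq_ent_sub_condEnt, hYX, sub_zero]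
    _ = mi p Zt Y := hsufft.symm
    _ ≤ mi p Zt X := mi_le_mi_of_condEnt_eq_zero p hp Zt hYX

theorem stmt_16 {Ω α β γ ζ δ : Type*} [Fintype Ω] [Fintype α] [DecidableEq α]
    [Fintype β] [DecidableEq β] [Fintype γ] [DecidableEq γ] [Fintype ζ] [DecidableEq ζ]
    [Fintype δ] [DecidableEq δ]
    (p : Ω → ℝ) (hp : ∀ ω, 0 ≤ p ω) (hsum : ∑ ω, p ω = 1)
    (X : Ω → α) (Y : Ω → β) (N : Ω → γ) (Z' : Ω → ζ)
    (hYX : condEnt p Y X = 0)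
    (hYN : mi p Y N = 0)
    (hXdet : condEnt p X (fun ω => (Y ω, N ω)) = 0)
    (hsuff : mi p Z' Y = mi p X Y)
    (hinv : mi p Z' N = 0)
    (hMarkov : cmi p (fun ω => (Y ω, N ω)) Z' X = 0) :
    ∀ Zt : Ω → δ, mi p Zt Y = mi p X Y →
      cmi p (fun ω => (Y ω, N ω)) Zt X = 0 →
      mi p Z' X ≤ mi p Zt X :=
  stmt_16_general p hp X Y N Z' hYX hYN hXdet hinv
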